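/- For a stationary AR(1) model with multiplicative measurement error, the h-step mean squared prediction error of the corrected forecast starting from X̂_T = X_T*/β₀ equals P_e^{(h)} = φ₁^{2h}{σ_ε²/(1−φ₁²) + μ²}σ_u² + Σ_{i=0}^{h-1}φ₁^{2i}σ_ε², where μ = E(X_T). -/

import Mathlib

/-!
The forecast error `D h = X̂_{T+h} - X_{T+h}` starts at `D 0 = (u_T - 1) X_T` and obeys
`D (h + 1) = φ₁ D h - ε_{T+h+1}`. Since the innovation `ε_{T+h+1}` is centred and independent
of `D h`, the cross term vanishes and `E (D h)²` satisfies the affine recursion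
`m (h + 1) = φ₁² m h + σ_ε²`. Independence of `u_T` and `X_T` gives the initial value
`E (D 0)² = E (u_T - 1)² E X_T² = σ_u² (Var X_T + μ²)`.
-/

open MeasureTheory ProbabilityTheory Filter Matrix

noncomputable def expect {Ω : Type*} [MeasurableSpace Ω] (P : Measure Ω) (f : Ω → ℝ) : ℝ :=
  ∫ ω, f ω ∂P

noncomputable def cov {Ω : Type*} [MeasurableSpace Ω] (P : Measure Ω) (f g : Ω → ℝ) : ℝ :=
  expect P (fun ω => (f ω - expect P f) * (g ω - expect P g))

noncomputable def pvar {Ω : Type*} [MeasurableSpace Ω] (P : Measure Ω) (f : Ω → ℝ) : ℝ :=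
  cov P f f

theorem eq_pow_mul_add_sum_of_affine_recurrence {R : Type*} [CommSemiring R] {a : ℕ → R}
    {r s : R} (ha : ∀ n, a (n + 1) = r * a n + s) (n : ℕ) :
    a n = r ^ n * a 0 + ∑ i ∈ Finset.range n, r ^ i * s := by
  induction n with
  | zero => simp
  | succ n ih =>
    rw [ha, ih, Finset.sum_range_succ', mul_add, Finset.mul_sum]
    simp only [pow_succ', pow_zero, one_mul, mul_assoc, add_assoc]

section Moments

variable {Ω : Type*} [MeasurableSpace Ω] {P : Measure Ω}

theorem cov_eq_covariance (f g : Ω → ℝ) : cov P f g = covariance f g P := rfl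

theorem integral_sq_sub_expect_eq_pvar (f : Ω → ℝ) :
    ∫ ω, (f ω - expect P f) ^ 2 ∂P = pvar P f := by
  simp only [pvar, cov, expect, sq]

theorem integral_sq_eq_pvar_add_sq [IsProbabilityMeasure P] {f : Ω → ℝ} (hf : MemLp f 2 P) :
    ∫ ω, f ω ^ 2 ∂P = pvar P f + expect P f ^ 2 := by
  rw [pvar, cov_eq_covariance, covariance_eq_sub hf hf, expect]
  simp only [Pi.mul_apply, sq, sub_add_cancel]

theorem ProbabilityTheory.IndepFun.sq {f g : Ω → ℝ} (hfg : IndepFun f g P) :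
    IndepFun (fun ω => f ω ^ 2) (fun ω => g ω ^ 2) P :=
  hfg.comp (measurable_id.pow_const 2) (measurable_id.pow_const 2)

theorem ProbabilityTheory.IndepFun.integral_mul_sq {f g : Ω → ℝ} (hfg : IndepFun f g P)
    (hf : AEStronglyMeasurable f P) (hg : AEStronglyMeasurable g P) :
    ∫ ω, (f ω * g ω) ^ 2 ∂P = (∫ ω, f ω ^ 2 ∂P) * ∫ ω, g ω ^ 2 ∂P := by
  simp only [mul_pow]
  exact hfg.sq.integral_fun_mul_eq_mul_integral (hf.pow 2) (hg.pow 2)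

theorem ProbabilityTheory.IndepFun.memLp_two_mul [IsFiniteMeasure P] {f g : Ω → ℝ}
    (hfg : IndepFun f g P) (hf : MemLp f 2 P) (hg : MemLp g 2 P) :
    MemLp (fun ω => f ω * g ω) 2 P := by
  refine (memLp_two_iff_integrable_sq (hf.1.mul hg.1)).2 ?_
  simp only [Pi.mul_apply, mul_pow]
  exact hfg.sq.integrable_mul hf.integrable_sq hg.integrable_sq

theorem integral_sq_const_mul_sub_of_indepFun [IsFiniteMeasure P] {d e : Ω → ℝ} (c : ℝ)
    (hed : IndepFun e d P) (hd : MemLp d 2 P) (he : MemLp e 2 P) (he0 : ∫ ω, e ω ∂P = 0) :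
    ∫ ω, (c * d ω - e ω) ^ 2 ∂P = c ^ 2 * ∫ ω, d ω ^ 2 ∂P + ∫ ω, e ω ^ 2 ∂P := by
  have hcross : ∫ ω, e ω * d ω ∂P = 0 := by
    rw [hed.integral_fun_mul_eq_mul_integral he.1 hd.1, he0, zero_mul]
  have hd2 := hd.integrable_sq.const_mul (c ^ 2)
  have hed1 : Integrable (fun ω => 2 * c * (e ω * d ω)) P :=
    (hed.integrable_mul (he.integrable one_le_two) (hd.integrable one_le_two)).const_mul (2 * c)
  calc ∫ ω, (c * d ω - e ω) ^ 2 ∂P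
      = ∫ ω, (c ^ 2 * d ω ^ 2 - 2 * c * (e ω * d ω)) + e ω ^ 2 ∂P := by
        congr 1; funext ω; ring
    _ = c ^ 2 * ∫ ω, d ω ^ 2 ∂P + ∫ ω, e ω ^ 2 ∂P := by
        rw [integral_add (by exact hd2.sub hed1) he.integrable_sq, integral_sub hd2 hed1,
          integral_const_mul, integral_const_mul, hcross, mul_zero, sub_zero]

theorem integral_sq_of_ar1_recursion [IsFiniteMeasure P] {d e : ℕ → Ω → ℝ} {φ s : ℝ}
    (hrec : ∀ h ω, d (h + 1) ω = φ * d h ω - e h ω) (hed : ∀ h, IndepFun (e h) (d h) P)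
    (he : ∀ h, MemLp (e h) 2 P) (he0 : ∀ h, ∫ ω, e h ω ∂P = 0)
    (he2 : ∀ h, ∫ ω, e h ω ^ 2 ∂P = s) (hd0 : MemLp (d 0) 2 P) (h : ℕ) :
    ∫ ω, d h ω ^ 2 ∂P =
      φ ^ (2 * h) * ∫ ω, d 0 ω ^ 2 ∂P + ∑ i ∈ Finset.range h, φ ^ (2 * i) * s := by
  have hrec' : ∀ h, d (h + 1) = fun ω => φ * d h ω - e h ω := fun h => funext (hrec h)
  have hd : ∀ h, MemLp (d h) 2 P := by
    intro h
    induction h with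
    | zero => exact hd0
    | succ h ih => rw [hrec' h]; exact (ih.const_mul φ).sub (he h)
  simp only [pow_mul]
  refine eq_pow_mul_add_sum_of_affine_recurrence (a := fun h => ∫ ω, d h ω ^ 2 ∂P)
    (fun h => ?_) h
  rw [hrec' h, integral_sq_const_mul_sub_of_indepFun φ (hed h) (hd h) (he h) (he0 h), he2]

end Moments

theorem ar1_prediction_error_multiplicative_general
    {Ω : Type*} [MeasurableSpace Ω] (P : Measure Ω) [IsProbabilityMeasure P]
    (X Xhat : ℕ → Ω → ℝ) (ε : ℕ → Ω → ℝ) (uT Xstar : Ω → ℝ)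
    (φ0 φ1 β0 σε σu μX : ℝ) (Pe : ℕ → ℝ)
    (hβ0 : 0 < β0)
    (hAR : ∀ h ω, X (h + 1) ω = φ0 + φ1 * X h ω + ε (h + 1) ω)
    (hstar : ∀ ω, Xstar ω = β0 * uT ω * X 0 ω)
    (hXhat0 : ∀ ω, Xhat 0 ω = Xstar ω / β0)
    (hXhatS : ∀ h ω, Xhat (h + 1) ω = φ0 + φ1 * Xhat h ω)
    (hXmean : expect P (X 0) = μX)
    (hXvar : pvar P (X 0) = σε ^ 2 / (1 - φ1 ^ 2))
    (humean : expect P uT = 1)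
    (huvar : pvar P uT = σu ^ 2)
    (huX : IndepFun uT (X 0) P)
    (hεmean : ∀ h, expect P (ε h) = 0)
    (hεvar : ∀ h, expect P (fun ω => ε h ω ^ 2) = σε ^ 2)
    (hindep : ∀ h, IndepFun (ε (h + 1)) (fun ω => Xhat h ω - X h ω) P)
    (hεint : ∀ h, Integrable (ε h) P)
    (hεsq : ∀ h, Integrable (fun ω => ε h ω ^ 2) P)
    (huint : Integrable uT P)
    (husq : Integrable (fun ω => uT ω ^ 2) P)
    (hXint : Integrable (X 0) P)
    (hXsq : Integrable (fun ω => X 0 ω ^ 2) P)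
    (hPe : ∀ h, Pe h = expect P (fun ω => (Xhat h ω - X h ω) ^ 2)) :
    ∀ h : ℕ, 1 ≤ h →
      Pe h = φ1 ^ (2 * h) * (σε ^ 2 / (1 - φ1 ^ 2) + μX ^ 2) * σu ^ 2
          + ∑ i ∈ Finset.range h, φ1 ^ (2 * i) * σε ^ 2 := by
  intro h _
  have hD0 : ∀ ω, Xhat 0 ω - X 0 ω = (uT ω - 1) * X 0 ω := by
    intro ω
    rw [hXhat0, hstar]
    field_simp
  have hu : MemLp (fun ω => uT ω - 1) 2 P :=
    ((memLp_two_iff_integrable_sq huint.1).2 husq).sub (memLp_const 1)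
  have hX : MemLp (X 0) 2 P := (memLp_two_iff_integrable_sq hXint.1).2 hXsq
  have hu₁X : IndepFun (fun ω => uT ω - 1) (X 0) P :=
    huX.comp (measurable_id.sub_const 1) measurable_id
  have hPe0 :
      ∫ ω, (Xhat 0 ω - X 0 ω) ^ 2 ∂P = σu ^ 2 * (σε ^ 2 / (1 - φ1 ^ 2) + μX ^ 2) := by
    simp_rw [hD0]
    rw [hu₁X.integral_mul_sq hu.1 hX.1, integral_sq_eq_pvar_add_sq hX, hXvar, hXmean,
      ← huvar, ← integral_sq_sub_expect_eq_pvar, humean]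
  rw [hPe, expect,
    integral_sq_of_ar1_recursion (φ := φ1) (fun h ω => by rw [hXhatS, hAR]; ring) hindep
    (fun h => (memLp_two_iff_integrable_sq (hεint _).1).2 (hεsq _))
    (fun h => hεmean _) (fun h => hεvar _) (funext hD0 ▸ hu₁X.memLp_two_mul hu hX), hPe0]
  ring

/-- For a stationary AR(1) model with multiplicative measurement error, the
h-step mean squared prediction error of the corrected forecast (started from
`X̂_T = X*_T/β0`) equals
`P_e(h) = φ1^{2h} {σε²/(1-φ1²) + μ²} σu² + ∑_{i=0}^{h-1} φ1^{2i} σε²`. -/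
theorem ar1_prediction_error_multiplicative
    {Ω : Type*} [MeasurableSpace Ω] (P : Measure Ω) [IsProbabilityMeasure P]
    (X Xhat : ℕ → Ω → ℝ) (ε : ℕ → Ω → ℝ) (uT Xstar : Ω → ℝ)
    (φ0 φ1 β0 σε σu μX : ℝ) (Pe : ℕ → ℝ)
    (hφ : |φ1| < 1) (hβ0 : 0 < β0)
    (hAR : ∀ h ω, X (h + 1) ω = φ0 + φ1 * X h ω + ε (h + 1) ω)
    (hstar : ∀ ω, Xstar ω = β0 * uT ω * X 0 ω)
    (hXhat0 : ∀ ω, Xhat 0 ω = Xstar ω / β0)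
    (hXhatS : ∀ h ω, Xhat (h + 1) ω = φ0 + φ1 * Xhat h ω)
    (hXmean : expect P (X 0) = μX)
    (hXvar : pvar P (X 0) = σε ^ 2 / (1 - φ1 ^ 2))
    (humean : expect P uT = 1)
    (huvar : pvar P uT = σu ^ 2)
    (huX : IndepFun uT (X 0) P)
    (huε : ∀ h, IndepFun uT (ε h) P)
    (hεmean : ∀ h, expect P (ε h) = 0)
    (hεvar : ∀ h, expect P (fun ω => ε h ω ^ 2) = σε ^ 2)
    (hindep : ∀ h, IndepFun (ε (h + 1)) (fun ω => Xhat h ω - X h ω) P)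
    (hεε : ∀ h k, h ≠ k → IndepFun (ε h) (ε k) P)
    (hεX : ∀ h, IndepFun (ε (h + 1)) (X 0) P)
    (hεint : ∀ h, Integrable (ε h) P)
    (hεsq : ∀ h, Integrable (fun ω => ε h ω ^ 2) P)
    (huint : Integrable uT P)
    (husq : Integrable (fun ω => uT ω ^ 2) P)
    (hXint : Integrable (X 0) P)
    (hXsq : Integrable (fun ω => X 0 ω ^ 2) P)
    (hdiffsq : ∀ h, Integrable (fun ω => (Xhat h ω - X h ω) ^ 2) P)
    (hPe : ∀ h, Pe h = expect P (fun ω => (Xhat h ω - X h ω) ^ 2)) :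
    ∀ h : ℕ, 1 ≤ h →
      Pe h = φ1 ^ (2 * h) * (σε ^ 2 / (1 - φ1 ^ 2) + μX ^ 2) * σu ^ 2
          + ∑ i ∈ Finset.range h, φ1 ^ (2 * i) * σε ^ 2 :=
  ar1_prediction_error_multiplicative_general P X Xhat ε uT Xstar φ0 φ1 β0 σε σu μX Pe hβ0 hAR hstar
    hXhat0 hXhatS hXmean hXvar humean huvar huX hεmean hεvar hindep hεint hεsq huint husq hXint hXsq
    hPe
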